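/- Let A be a one-counter automaton without zero tests, with state set Q, and let (q',j') →^z (p',i') be a run with j' − i' > |Q|. Then there exists an integer k' > 0 and a factorization z = y₁y₂y₃ such that for every N ≥ 0 there is a run (q', j' + N·k') →^{y₁(y₂)^{N+1}y₃} (p', i'). -/
import Mathlib


/-- Counter actions of a one-counter automaton. -/
inductive CAct
  | inc | dec | internal | zero
deriving DecidableEq

/-- A one-counter automaton: transitions labelled by an optional letter
(ε-transitions allowed) and a counter action. -/
structure OCA (Q A : Type) where
  trans : Set (Q × Option A × CAct × Q)
  start : Q
  final : Set Q

/-- One step of an OCA on configurations (state, counter ∈ ℕ). -/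
def OCA.Step {Q A : Type} (M : OCA Q A) (x : Q × ℕ) (a : Option A) (y : Q × ℕ) : Prop :=
  ((x.1, a, CAct.inc, y.1) ∈ M.trans ∧ y.2 = x.2 + 1) ∨
  ((x.1, a, CAct.dec, y.1) ∈ M.trans ∧ x.2 = y.2 + 1) ∨
  ((x.1, a, CAct.internal, y.1) ∈ M.trans ∧ y.2 = x.2) ∨
  ((x.1, a, CAct.zero, y.1) ∈ M.trans ∧ x.2 = 0 ∧ y.2 = 0)

/-- A run of an OCA from a configuration to a configuration, reading a word. -/
inductive OCA.Run {Q A : Type} (M : OCA Q A) : Q × ℕ → List A → Q × ℕ → Prop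
  | nil (x : Q × ℕ) : OCA.Run M x [] x
  | cons {x y z : Q × ℕ} {a : Option A} {w : List A} :
      M.Step x a y → OCA.Run M y w z → OCA.Run M x (a.toList ++ w) z

namespace OCA

variable {Q A : Type} {M : OCA Q A}

lemma Run.append {x y z : Q × ℕ} {u v : List A}
    (h1 : M.Run x u y) (h2 : M.Run y v z) : M.Run x (u ++ v) z := by
  induction h1 with
  | nil => exact h2
  | cons hs _ ih => rw [List.append_assoc]; exact .cons hs (ih h2)

lemma Step.shift (hz : ∀ t ∈ M.trans, t.2.2.1 ≠ CAct.zero) {x y : Q × ℕ}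
    {a : Option A} {m : ℕ} (h : M.Step x a y) :
    M.Step (x.1, x.2 + m) a (y.1, y.2 + m) := by
  rcases h with ⟨ht, hc⟩ | ⟨ht, hc⟩ | ⟨ht, hc⟩ | ⟨ht, hc, hc'⟩
  · exact Or.inl ⟨ht, by simp; omega⟩
  · exact Or.inr (Or.inl ⟨ht, by simp; omega⟩)
  · exact Or.inr (Or.inr (Or.inl ⟨ht, by simp; omega⟩))
  · exact absurd rfl (hz _ ht)

lemma Run.shift (hz : ∀ t ∈ M.trans, t.2.2.1 ≠ CAct.zero) {x y : Q × ℕ}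
    {w : List A} {m : ℕ} (h : M.Run x w y) :
    M.Run (x.1, x.2 + m) w (y.1, y.2 + m) := by
  induction h with
  | nil x => exact .nil _
  | cons hs _ ih => exact .cons (hs.shift hz) ih

lemma Step.counter {x y : Q × ℕ} {a : Option A} (h : M.Step x a y) :
    x.2 ≤ y.2 + 1 ∧ y.2 ≤ x.2 + 1 := by
  rcases h with ⟨_, hc⟩ | ⟨_, hc⟩ | ⟨_, hc⟩ | ⟨_, hc, hc'⟩ <;> omega

/-- Crossing lemma: a run descending below level `t` passes through level `t`. -/
lemma Run.cross {x : Q × ℕ} {z : List A} {y : Q × ℕ} (h : M.Run x z y) :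
    ∀ t, y.2 ≤ t → t < x.2 →
      ∃ r u v, z = u ++ v ∧ M.Run x u (r, t) ∧ M.Run (r, t) v y := by
  induction h with
  | nil x => intro t h1 h2; omega
  | @cons x y' yend a w hs hrun ih =>
    intro t h1 h2
    by_cases hy : y'.2 = t
    · have hy' : (y'.1, t) = y' := by rw [← hy]
      refine ⟨y'.1, a.toList, w, by simp, ?_, ?_⟩
      · have : M.Run x (a.toList ++ []) (y'.1, t) := by
          rw [hy']; exact .cons hs (.nil _)
        simpa using this
      · rw [hy']; exact hrun
    · have hb := hs.counter
      have ht : t < y'.2 := by omega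
      obtain ⟨r, u, v, hsplit, h1', h2'⟩ := ih t h1 ht
      exact ⟨r, a.toList ++ u, v, by rw [hsplit, List.append_assoc], .cons hs h1', h2'⟩

/-- Find a pumpable (strictly counter-decreasing) loop inside a run that drops
by more than `|Q|`. -/
lemma findLoop [Fintype Q] [DecidableEq Q] (hz : ∀ t ∈ M.trans, t.2.2.1 ≠ CAct.zero)
    (q₀ : Q) (j₀ : ℕ) (z₀ : List A) :
    ∀ c : ℕ, ∀ (S : Finset Q) (g : Q → ℕ) (q : Q) (z pre : List A) (p : Q) (i : ℕ),
    M.Run (q, c) z (p, i) →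
    z₀ = pre ++ z →
    M.Run (q₀, j₀) pre (q, c) →
    (∀ s ∈ S, c ≤ g s ∧ ∃ u v, pre = u ++ v ∧
        M.Run (q₀, j₀) u (s, g s) ∧ M.Run (s, g s) v (q, c)) →
    i + Fintype.card Q + 1 ≤ c + S.card →
    ∃ (r : Q) (a b : ℕ) (y₁ y₂ y₃ : List A),
      b < a ∧ z₀ = y₁ ++ (y₂ ++ y₃) ∧
      M.Run (q₀, j₀) y₁ (r, a) ∧ M.Run (r, a) y₂ (r, b) ∧ M.Run (r, b) y₃ (p, i) := by
  intro c
  induction c using Nat.strong_induction_on with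
  | _ c ihc =>
  intro S g q z pre p i hrun hsplit hpre hS hcard
  have hSc : S.card ≤ Fintype.card Q := Finset.card_le_univ S
  have hic : i < c := by omega
  obtain ⟨r, u, v, huv, hru, hrv⟩ := hrun.cross (c - 1)
    (show i ≤ c - 1 by omega) (show c - 1 < c by omega)
  by_cases hr : r ∈ S
  · obtain ⟨hge, u', v', hpre', hr1, hr2⟩ := hS r hr
    refine ⟨r, g r, c - 1, u', v' ++ u, v, by omega, ?_, hr1, hr2.append hru, hrv⟩
    rw [hsplit, hpre', huv]; simp [List.append_assoc]
  · refine ihc (c - 1) (by omega) (insert r S) (Function.update g r (c - 1)) r v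
      (pre ++ u) p i hrv (by rw [hsplit, huv, List.append_assoc]) (hpre.append hru)
      ?_ ?_
    · intro s hs
      rcases Finset.mem_insert.mp hs with rfl | hs'
      · refine ⟨by simp, pre ++ u, [], by simp, ?_, ?_⟩
        · simpa using hpre.append hru
        · simpa using Run.nil (s, c - 1)
      · obtain ⟨hge, u', v', hpre', hr1, hr2⟩ := hS s hs'
        have hne : s ≠ r := by rintro rfl; exact hr hs'
        refine ⟨?_, u', v' ++ u, by rw [hpre', List.append_assoc], ?_, ?_⟩
        · rw [Function.update_of_ne hne]; omega
        · rwa [Function.update_of_ne hne]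
        · rw [Function.update_of_ne hne]; exact hr2.append hru
    · rw [Finset.card_insert_of_notMem hr]; omega

end OCA

/-- Pumping down: for an OCA without zero tests, a run (q',j') →^z (p',i') with
j' − i' > |Q| contains an iterable segment: z = y₁y₂y₃ and there is k' > 0 such
that for each N ≥ 0 there is a run (q', j' + N·k') →^{y₁(y₂)^{N+1}y₃} (p', i'). -/
theorem pump_down {Q A : Type} [Fintype Q] (M : OCA Q A)
    (hz : ∀ t ∈ M.trans, t.2.2.1 ≠ CAct.zero)
    (q' p' : Q) (j' i' : ℕ) (z : List A)
    (hrun : M.Run (q', j') z (p', i'))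
    (hgap : i' + Fintype.card Q < j') :
    ∃ k' : ℕ, 0 < k' ∧ ∃ y₁ y₂ y₃ : List A, z = y₁ ++ y₂ ++ y₃ ∧
      ∀ N : ℕ,
        M.Run (q', j' + N * k') (y₁ ++ (List.replicate (N + 1) y₂).flatten ++ y₃) (p', i') := by
  letI := Classical.decEq Q
  obtain ⟨r, a, b, y₁, y₂, y₃, hba, hsplit, h1, h2, h3⟩ :=
    OCA.findLoop hz q' j' z j' ∅ (fun _ => 0) q' z [] p' i' hrun rfl (.nil _)
      (by simp) (by simp; omega)
  refine ⟨a - b, by omega, y₁, y₂, y₃, by rw [hsplit, List.append_assoc], fun N => ?_⟩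
  have hiter : ∀ n : ℕ, M.Run (r, a + n * (a - b)) (List.replicate (n + 1) y₂).flatten (r, b) := by
    intro n
    induction n with
    | zero => simpa using h2
    | succ n ihn =>
      have hstep : M.Run (r, a + (n + 1) * (a - b)) y₂ (r, b + (n + 1) * (a - b)) :=
        h2.shift hz (m := (n + 1) * (a - b))
      have hkey : b + (n + 1) * (a - b) = a + n * (a - b) := by
        rw [Nat.succ_mul]
        generalize n * (a - b) = m
        omega
      rw [hkey] at hstep
      rw [List.replicate_succ, List.flatten_cons]
      exact hstep.append ihn
  rw [List.append_assoc]
  exact (h1.shift hz (m := N * (a - b))).append ((hiter N).append h3)
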